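/- Let d ∈ ℕ with d ≥ 1, let Δ > 0 and ρ > 0, and set σ² = Δ²/(2ρ). For a ∈ ℝ^d let P_a(x) = ∏_{i=1}^d φ_{a_i,σ}(x_i) denote the density of the product Gaussian measure ⊗_i N(a_i, σ²) on ℝ^d. Then for all a, b ∈ ℝ^d with ‖a − b‖₂ ≤ Δ and every real α > 1, ∫_{ℝ^d} P_a(x)^α · P_b(x)^{1−α} dx ≤ exp(α·(α − 1)·ρ). Equivalently, the α-Rényi divergence between the two product Gaussians is at most α·ρ for all α > 1, which is the ρ-zCDP guarantee of the Gaussian mechanism with ℓ2-sensitivity Δ and variance Δ²/(2ρ). -/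

import Mathlib

/-! Completing the square, `φ_{a,σ}^α φ_{b,σ}^{1-α} = exp(α(α-1)(a-b)²/(2σ²)) · φ_{αa+(1-α)b,σ}`,
so in one dimension the Rényi integral equals `exp(α(α-1)(a-b)²/(2σ²))`. The product densities
factor coordinatewise and Fubini multiplies these, giving `exp(α(α-1)‖a-b‖₂²/(2σ²))`; with
`σ² = Δ²/(2ρ)` and `‖a-b‖₂ ≤ Δ` the exponent is at most `α(α-1)ρ`. -/

open MeasureTheory

/-- The density of the Gaussian measure `N(m, σ²)` with respect to Lebesgue measure. -/
noncomputable def gaussDensity (m σ x : ℝ) : ℝ :=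
  1 / (σ * Real.sqrt (2 * Real.pi)) * Real.exp (-(x - m) ^ 2 / (2 * σ ^ 2))

lemma gaussDensity_pos (m : ℝ) {σ : ℝ} (hσ : 0 < σ) (x : ℝ) : 0 < gaussDensity m σ x := by
  unfold gaussDensity
  have : 0 < Real.sqrt (2 * Real.pi) := Real.sqrt_pos.2 (by positivity)
  positivity

lemma gaussDensity_eq_gaussianPDFReal (m : ℝ) {σ : ℝ} (hσ : 0 < σ) (x : ℝ) :
    gaussDensity m σ x = ProbabilityTheory.gaussianPDFReal m ⟨σ ^ 2, sq_nonneg σ⟩ x := by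
  have hsqrt : Real.sqrt (2 * Real.pi * σ ^ 2) = σ * Real.sqrt (2 * Real.pi) := by
    rw [mul_comm, Real.sqrt_mul (sq_nonneg σ), Real.sqrt_sq hσ.le]
  unfold gaussDensity ProbabilityTheory.gaussianPDFReal
  change _ = (Real.sqrt (2 * Real.pi * σ ^ 2))⁻¹ * Real.exp (-(x - m) ^ 2 / (2 * σ ^ 2))
  rw [hsqrt, one_div]

lemma integral_gaussDensity (m : ℝ) {σ : ℝ} (hσ : 0 < σ) : ∫ x, gaussDensity m σ x = 1 := by
  have hv : (⟨σ ^ 2, sq_nonneg σ⟩ : NNReal) ≠ 0 :=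
    fun h => pow_ne_zero 2 hσ.ne' (congrArg NNReal.toReal h)
  simp_rw [gaussDensity_eq_gaussianPDFReal m hσ]
  exact ProbabilityTheory.integral_gaussianPDFReal_eq_one m hv

lemma gaussDensity_rpow_mul_rpow (a b : ℝ) {σ : ℝ} (hσ : 0 < σ) (α x : ℝ) :
    gaussDensity a σ x ^ α * gaussDensity b σ x ^ (1 - α) =
      Real.exp (α * (α - 1) * (a - b) ^ 2 / (2 * σ ^ 2)) *
        gaussDensity (α * a + (1 - α) * b) σ x := by
  set C : ℝ := 1 / (σ * Real.sqrt (2 * Real.pi))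
  have hC : 0 < C := by
    have : 0 < Real.sqrt (2 * Real.pi) := Real.sqrt_pos.2 (by positivity)
    positivity
  have hCC : C ^ α * C ^ (1 - α) = C := by
    rw [← Real.rpow_add hC, add_sub_cancel, Real.rpow_one]
  have hexponent : -(x - a) ^ 2 / (2 * σ ^ 2) * α + -(x - b) ^ 2 / (2 * σ ^ 2) * (1 - α) =
      α * (α - 1) * (a - b) ^ 2 / (2 * σ ^ 2) +
        -(x - (α * a + (1 - α) * b)) ^ 2 / (2 * σ ^ 2) := by
    field_simp
    ring
  simp only [gaussDensity]
  rw [Real.mul_rpow hC.le (Real.exp_nonneg _), Real.mul_rpow hC.le (Real.exp_nonneg _),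
    ← Real.exp_mul, ← Real.exp_mul]
  calc C ^ α * Real.exp (-(x - a) ^ 2 / (2 * σ ^ 2) * α) *
        (C ^ (1 - α) * Real.exp (-(x - b) ^ 2 / (2 * σ ^ 2) * (1 - α)))
      = (C ^ α * C ^ (1 - α)) *
          Real.exp (-(x - a) ^ 2 / (2 * σ ^ 2) * α + -(x - b) ^ 2 / (2 * σ ^ 2) * (1 - α)) := by
        rw [Real.exp_add]; ring
    _ = _ := by rw [hCC, hexponent, Real.exp_add]; ring

lemma integral_gaussDensity_rpow_mul_rpow (a b : ℝ) {σ : ℝ} (hσ : 0 < σ) (α : ℝ) :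
    ∫ x, gaussDensity a σ x ^ α * gaussDensity b σ x ^ (1 - α) =
      Real.exp (α * (α - 1) * (a - b) ^ 2 / (2 * σ ^ 2)) := by
  simp_rw [gaussDensity_rpow_mul_rpow a b hσ α]
  rw [integral_const_mul, integral_gaussDensity _ hσ, mul_one]

lemma integral_prod_gaussDensity_rpow_mul_rpow {ι : Type*} [Fintype ι] (a b : ι → ℝ) {σ : ℝ}
    (hσ : 0 < σ) (α : ℝ) :
    ∫ x : ι → ℝ, (∏ i, gaussDensity (a i) σ (x i)) ^ α *
        (∏ i, gaussDensity (b i) σ (x i)) ^ (1 - α) =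
      Real.exp (α * (α - 1) * (∑ i, (a i - b i) ^ 2) / (2 * σ ^ 2)) := by
  have hfactor : ∀ x : ι → ℝ,
      (∏ i, gaussDensity (a i) σ (x i)) ^ α * (∏ i, gaussDensity (b i) σ (x i)) ^ (1 - α) =
        ∏ i, gaussDensity (a i) σ (x i) ^ α * gaussDensity (b i) σ (x i) ^ (1 - α) := by
    intro x
    have hnonneg : ∀ c : ι → ℝ, ∀ i ∈ Finset.univ, 0 ≤ gaussDensity (c i) σ (x i) :=
      fun c i _ => (gaussDensity_pos _ hσ _).le
    rw [← Real.finsetProd_rpow _ _ (hnonneg a), ← Real.finsetProd_rpow _ _ (hnonneg b),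
      ← Finset.prod_mul_distrib]
  simp_rw [hfactor]
  rw [integral_fintype_prod_volume_eq_prod
    (fun i t => gaussDensity (a i) σ t ^ α * gaussDensity (b i) σ t ^ (1 - α))]
  simp_rw [integral_gaussDensity_rpow_mul_rpow _ _ hσ, ← Real.exp_sum, Finset.mul_sum,
    Finset.sum_div]

theorem zCDP_gaussian_mechanism_general (d : ℕ) (Δ ρ : ℝ) (hΔ : 0 < Δ) (hρ : 0 < ρ)
    (a b : Fin d → ℝ) (hsens : Real.sqrt (∑ i, (a i - b i) ^ 2) ≤ Δ)
    (α : ℝ) (hα : 1 < α) :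
    ∫ x : Fin d → ℝ,
        (∏ i, gaussDensity (a i) (Real.sqrt (Δ ^ 2 / (2 * ρ))) (x i)) ^ α *
          (∏ i, gaussDensity (b i) (Real.sqrt (Δ ^ 2 / (2 * ρ))) (x i)) ^ (1 - α) ≤
      Real.exp (α * (α - 1) * ρ) := by
  have hσ : 0 < Real.sqrt (Δ ^ 2 / (2 * ρ)) := Real.sqrt_pos.2 (by positivity)
  have hσsq : Real.sqrt (Δ ^ 2 / (2 * ρ)) ^ 2 = Δ ^ 2 / (2 * ρ) := Real.sq_sqrt (by positivity)
  have hdist : ∑ i, (a i - b i) ^ 2 ≤ Δ ^ 2 := (Real.sqrt_le_iff.1 hsens).2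
  have hαα : 0 ≤ α * (α - 1) := by nlinarith
  rw [integral_prod_gaussDensity_rpow_mul_rpow a b hσ, hσsq, Real.exp_le_exp,
    div_le_iff₀ (by positivity)]
  calc α * (α - 1) * ∑ i, (a i - b i) ^ 2 ≤ α * (α - 1) * Δ ^ 2 := by gcongr
    _ = α * (α - 1) * ρ * (2 * (Δ ^ 2 / (2 * ρ))) := by field_simp

/-- ρ-zCDP guarantee of the Gaussian mechanism with ℓ2-sensitivity `Δ` and variance
`σ² = Δ²/(2ρ)`: for `‖a − b‖₂ ≤ Δ` and every `α > 1`,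
`∫ P_a^α · P_b^{1−α} ≤ exp(α(α−1)ρ)`, i.e. the α-Rényi divergence between the two product
Gaussians is at most `α·ρ`. -/
theorem zCDP_gaussian_mechanism (d : ℕ) (hd : 1 ≤ d) (Δ ρ : ℝ) (hΔ : 0 < Δ) (hρ : 0 < ρ)
    (a b : Fin d → ℝ) (hsens : Real.sqrt (∑ i, (a i - b i) ^ 2) ≤ Δ)
    (α : ℝ) (hα : 1 < α) :
    ∫ x : Fin d → ℝ,
        (∏ i, gaussDensity (a i) (Real.sqrt (Δ ^ 2 / (2 * ρ))) (x i)) ^ α *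
          (∏ i, gaussDensity (b i) (Real.sqrt (Δ ^ 2 / (2 * ρ))) (x i)) ^ (1 - α) ≤
      Real.exp (α * (α - 1) * ρ) :=
  zCDP_gaussian_mechanism_general d Δ ρ hΔ hρ a b hsens α hα
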